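/- Let φ : EuclideanSpace ℝ (Fin 3) → ℝ and u : EuclideanSpace ℝ (Fin 3) → EuclideanSpace ℝ (Fin 3) be twice continuously differentiable (ContDiff ℝ 2, componentwise for u). Define the vector field w by w y = curl u y + (grad φ y) × (u y) (i.e., w = J¹u). Then for every x, div w x + ⟪grad φ x, w x⟫ = 0; that is, the composition of the shifted flux operators satisfies J² ∘ J¹ = 0 and the shifted operators preserve the de Rham complex property div ∘ curl = 0. -/

import Mathlib

/-!
With `a = ∇φ`, the product rule `div (a × u) = ⟪u, curl a⟫ - ⟪a, curl u⟫` together with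
`curl ∇φ = 0` and `div (curl u) = 0` gives `div w = -⟪∇φ, curl u⟫`, while
`⟪∇φ, w⟫ = ⟪∇φ, curl u⟫` because `∇φ × u` is orthogonal to `∇φ`.
-/

open scoped RealInnerProductSpace

/-- Fréchet directional derivative of a scalar function along the `i`-th
standard basis vector of `EuclideanSpace ℝ (Fin 3)`. -/
noncomputable def pd (i : Fin 3) (f : EuclideanSpace ℝ (Fin 3) → ℝ)
    (x : EuclideanSpace ℝ (Fin 3)) : ℝ :=
  fderiv ℝ f x (EuclideanSpace.single i 1)

/-- Componentwise curl of a vector field on `EuclideanSpace ℝ (Fin 3)`. -/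
noncomputable def curl3 (F : EuclideanSpace ℝ (Fin 3) → EuclideanSpace ℝ (Fin 3))
    (x : EuclideanSpace ℝ (Fin 3)) : EuclideanSpace ℝ (Fin 3) :=
  WithLp.toLp 2 ![pd 1 (fun y => F y 2) x - pd 2 (fun y => F y 1) x,
    pd 2 (fun y => F y 0) x - pd 0 (fun y => F y 2) x,
    pd 0 (fun y => F y 1) x - pd 1 (fun y => F y 0) x]

/-- Divergence of a vector field on `EuclideanSpace ℝ (Fin 3)`. -/
noncomputable def div3 (F : EuclideanSpace ℝ (Fin 3) → EuclideanSpace ℝ (Fin 3))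
    (x : EuclideanSpace ℝ (Fin 3)) : ℝ :=
  ∑ i : Fin 3, pd i (fun y => F y i) x

/-- Three-dimensional cross product on `EuclideanSpace ℝ (Fin 3)`. -/
noncomputable def cross3 (a b : EuclideanSpace ℝ (Fin 3)) : EuclideanSpace ℝ (Fin 3) :=
  WithLp.toLp 2 (crossProduct a b)

local notation "ℝ³" => EuclideanSpace ℝ (Fin 3)

section PartialDerivatives

variable {f g : ℝ³ → ℝ} {x : ℝ³}

theorem pd_add (i : Fin 3) (hf : DifferentiableAt ℝ f x) (hg : DifferentiableAt ℝ g x) :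
    pd i (fun y => f y + g y) x = pd i f x + pd i g x := by
  simp [pd, fderiv_fun_add hf hg]

theorem pd_sub (i : Fin 3) (hf : DifferentiableAt ℝ f x) (hg : DifferentiableAt ℝ g x) :
    pd i (fun y => f y - g y) x = pd i f x - pd i g x := by
  simp [pd, fderiv_fun_sub hf hg]

theorem pd_mul (i : Fin 3) (hf : DifferentiableAt ℝ f x) (hg : DifferentiableAt ℝ g x) :
    pd i (fun y => f y * g y) x = pd i f x * g x + f x * pd i g x := by
  simp only [pd, fderiv_fun_mul hf hg, add_apply,
    smul_apply, smul_eq_mul]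
  ring

theorem ContDiffAt.differentiableAt_pd (hf : ContDiffAt ℝ 2 f x) (i : Fin 3) :
    DifferentiableAt ℝ (pd i f) x :=
  ((hf.fderiv_right (m := 1) (by norm_num)).differentiableAt one_ne_zero).clm_apply
    (differentiableAt_const _)

theorem pd_comm (i j : Fin 3) (hf : ContDiffAt ℝ 2 f x) :
    pd i (pd j f) x = pd j (pd i f) x := by
  have hd : DifferentiableAt ℝ (fderiv ℝ f) x :=
    (hf.fderiv_right (m := 1) (by norm_num)).differentiableAt one_ne_zero
  have second (v w : ℝ³) :
      fderiv ℝ (fun y => fderiv ℝ f y v) x w = fderiv ℝ (fderiv ℝ f) x w v := by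
    simp [fderiv_clm_apply hd (differentiableAt_const v)]
  unfold pd
  rw [second, second, hf.isSymmSndFDerivAt (by norm_num)]

theorem gradient_apply_eq_pd (φ : ℝ³ → ℝ) (y : ℝ³) (i : Fin 3) :
    gradient φ y i = pd i φ y := by
  have h := inner_gradient_left (𝕜 := ℝ) (f := φ) (x := y) (y := EuclideanSpace.single i 1)
  rw [EuclideanSpace.inner_single_right] at h
  simpa [pd] using h

end PartialDerivatives

section VectorCalculus

variable {x : ℝ³}

theorem div3_add {F G : ℝ³ → ℝ³} (hF : DifferentiableAt ℝ F x) (hG : DifferentiableAt ℝ G x) :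
    div3 (fun y => F y + G y) x = div3 F x + div3 G x := by
  simp only [div3, PiLp.add_apply, ← Finset.sum_add_distrib]
  exact Finset.sum_congr rfl fun i _ =>
    pd_add i ((differentiableAt_piLp 2).1 hF i) ((differentiableAt_piLp 2).1 hG i)

theorem ContDiffAt.differentiableAt_curl3 {u : ℝ³ → ℝ³} (hu : ContDiffAt ℝ 2 u x) :
    DifferentiableAt ℝ (curl3 u) x := by
  have d (i j : Fin 3) := ((contDiffAt_piLp 2).1 hu j).differentiableAt_pd i
  refine (differentiableAt_piLp 2).2 fun i => ?_
  fin_cases i <;> simpa [curl3] using (d _ _).fun_sub (d _ _)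

theorem ContDiffAt.differentiableAt_gradient {φ : ℝ³ → ℝ} (hφ : ContDiffAt ℝ 2 φ x) :
    DifferentiableAt ℝ (gradient φ) x :=
  (differentiableAt_piLp 2).2 fun i => by
    simpa only [gradient_apply_eq_pd] using hφ.differentiableAt_pd i

theorem DifferentiableAt.cross3 {a b : ℝ³ → ℝ³} (ha : DifferentiableAt ℝ a x)
    (hb : DifferentiableAt ℝ b x) : DifferentiableAt ℝ (fun y => cross3 (a y) (b y)) x := by
  have da (i : Fin 3) := (differentiableAt_piLp 2).1 ha i
  have db (i : Fin 3) := (differentiableAt_piLp 2).1 hb i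
  refine (differentiableAt_piLp 2).2 fun i => ?_
  fin_cases i <;> simpa [_root_.cross3, cross_apply] using
    ((da _).fun_mul (db _)).fun_sub ((da _).fun_mul (db _))

theorem div3_curl3 {u : ℝ³ → ℝ³} (hu : ContDiffAt ℝ 2 u x) : div3 (curl3 u) x = 0 := by
  have hc (j : Fin 3) := (contDiffAt_piLp 2).1 hu j
  have d (i j : Fin 3) := (hc j).differentiableAt_pd i
  simp only [div3, curl3, Fin.sum_univ_three, Matrix.cons_val_zero, Matrix.cons_val_one,
    Matrix.cons_val, pd_sub _ (d _ _) (d _ _)]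
  linear_combination pd_comm 0 1 (hc 2) + pd_comm 1 2 (hc 0) + pd_comm 2 0 (hc 1)

theorem curl3_gradient {φ : ℝ³ → ℝ} (hφ : ContDiffAt ℝ 2 φ x) : curl3 (gradient φ) x = 0 := by
  ext i
  fin_cases i <;> simp [curl3, gradient_apply_eq_pd, pd_comm _ _ hφ]

theorem div3_cross3 {a b : ℝ³ → ℝ³} (ha : DifferentiableAt ℝ a x) (hb : DifferentiableAt ℝ b x) :
    div3 (fun y => cross3 (a y) (b y)) x = ⟪b x, curl3 a x⟫ - ⟪a x, curl3 b x⟫ := by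
  have da (i : Fin 3) := (differentiableAt_piLp 2).1 ha i
  have db (i : Fin 3) := (differentiableAt_piLp 2).1 hb i
  simp only [div3, cross3, curl3, cross_apply, Fin.sum_univ_three, Matrix.cons_val_zero,
    Matrix.cons_val_one, Matrix.cons_val, pd_sub, pd_mul, DifferentiableAt.fun_mul, da, db,
    PiLp.inner_apply, RCLike.inner_apply, Real.ringHom_apply]
  ring

theorem inner_cross3_self (a b : ℝ³) : ⟪a, cross3 a b⟫ = 0 := by
  simp [cross3, EuclideanSpace.inner_eq_star_dotProduct, dotProduct_comm]

end VectorCalculus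

/-- The composition of the shifted flux operators `J² ∘ J¹` vanishes:
the shifted operators preserve the de Rham complex property `div ∘ curl = 0`. -/
theorem shifted_flux_div_curl_eq_zero
    (φ : EuclideanSpace ℝ (Fin 3) → ℝ)
    (u : EuclideanSpace ℝ (Fin 3) → EuclideanSpace ℝ (Fin 3))
    (hφ : ContDiff ℝ 2 φ)
    (hu : ∀ j, ContDiff ℝ 2 (fun y => u y j))
    (w : EuclideanSpace ℝ (Fin 3) → EuclideanSpace ℝ (Fin 3))
    (hw : ∀ y, w y = curl3 u y + cross3 (gradient φ y) (u y))
    (x : EuclideanSpace ℝ (Fin 3)) :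
    div3 w x + ⟪gradient φ x, w x⟫ = 0 := by
  have hφx : ContDiffAt ℝ 2 φ x := hφ.contDiffAt
  have hux : ContDiffAt ℝ 2 u x := ((contDiff_piLp 2).2 hu).contDiffAt
  obtain rfl : w = fun y => curl3 u y + cross3 (gradient φ y) (u y) := funext hw
  have hgx := hφx.differentiableAt_gradient
  have hux' := hux.differentiableAt two_ne_zero
  rw [div3_add hux.differentiableAt_curl3 (hgx.cross3 hux'), div3_curl3 hux,
    div3_cross3 hgx hux', curl3_gradient hφx, inner_add_right, inner_cross3_self]
  simp
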